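/- Let L be a Lie algebra over a field F admitting a bilinear form κ : L × L → F that is symmetric, nondegenerate, and invariant under all derivations of L, and assume in addition that every local derivation of L is a derivation. Then every 2-local derivation of L is a derivation. -/

import Mathlib

/-!
A 2-local derivation `∇` is skew with respect to `κ`: for given `x, z` one derivation `D`
agrees with `∇` at both points, so `κ (∇ x) z = κ (D x) z = - κ x (D z) = - κ x (∇ z)`.
A map with an adjoint for a left-separating form is automatically linear, so `∇` is a
linear map which agrees with some derivation at every point, i.e. a local derivation.
-/

namespace LinearMap

variable {R M N P : Type*} [CommRing R] [AddCommGroup M] [AddCommGroup N] [AddCommGroup P]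
  [Module R M] [Module R N] [Module R P]

theorem isLinearMap_of_forall_apply_eq_apply {κ : M →ₗ[R] N →ₗ[R] P} (hκ : κ.SeparatingLeft)
    {f : M → M} {g : N → N} (hfg : ∀ x z, κ (f x) z = κ x (g z)) : IsLinearMap R f where
  map_add x y := sub_eq_zero.mp <| hκ _ fun z => by
    simp only [map_sub, map_add, sub_apply, add_apply, hfg, sub_self]
  map_smul c x := sub_eq_zero.mp <| hκ _ fun z => by
    simp only [map_sub, map_smul, sub_apply, smul_apply, hfg, sub_self]

end LinearMap

section TwoLocal

variable {R L : Type*} [CommRing R] [LieRing L] [LieAlgebra R L]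

variable (R) in
def IsTwoLocalDerivation (f : L → L) : Prop :=
  ∀ x y, ∃ D : LieDerivation R L L, D x = f x ∧ D y = f y

namespace IsTwoLocalDerivation

variable {P : Type*} [AddCommGroup P] [Module R P] {κ : L →ₗ[R] L →ₗ[R] P} {f : L → L}

theorem exists_eq (hf : IsTwoLocalDerivation R f) (x : L) :
    ∃ D : LieDerivation R L L, D x = f x :=
  (hf x x).imp fun _ hD => hD.1

theorem apply_eq_apply_neg (hf : IsTwoLocalDerivation R f)
    (hκ : ∀ D : LieDerivation R L L, ∀ x y, κ (D x) y + κ x (D y) = 0) (x z : L) :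
    κ (f x) z = κ x (-f z) := by
  obtain ⟨D, hx, hz⟩ := hf x z
  rw [← hx, ← hz, map_neg]
  exact eq_neg_of_add_eq_zero_left (hκ D x z)

theorem isLinearMap (hf : IsTwoLocalDerivation R f) (hsep : κ.SeparatingLeft)
    (hκ : ∀ D : LieDerivation R L L, ∀ x y, κ (D x) y + κ x (D y) = 0) :
    IsLinearMap R f :=
  LinearMap.isLinearMap_of_forall_apply_eq_apply hsep (hf.apply_eq_apply_neg hκ)

end IsTwoLocalDerivation

end TwoLocal

theorem twoLocalDerivation_isDerivation_general (F : Type*) [Field F] (L : Type*) [LieRing L]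
    [LieAlgebra F L]
    (kappa : L →ₗ[F] L →ₗ[F] F)
    (hnondeg : ∀ x : L, (∀ y : L, kappa x y = 0) → x = 0)
    (hinv : ∀ D : LieDerivation F L L, ∀ x y : L, kappa (D x) y + kappa x (D y) = 0)
    (hlocal : ∀ Δ : L →ₗ[F] L, (∀ x : L, ∃ D : LieDerivation F L L, Δ x = D x) →
      ∃ D : LieDerivation F L L, ⇑Δ = ⇑D)
    (nabla : L → L)
    (h : ∀ x y : L, ∃ D : LieDerivation F L L, D x = nabla x ∧ D y = nabla y) :
    ∃ D : LieDerivation F L L, ∀ x : L, nabla x = D x := by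
  have htwo : IsTwoLocalDerivation F nabla := h
  let Δ : L →ₗ[F] L := IsLinearMap.mk' nabla (htwo.isLinearMap hnondeg hinv)
  obtain ⟨D, hD⟩ := hlocal Δ fun x => (htwo.exists_eq x).imp fun _ hE => hE.symm
  exact ⟨D, congrFun hD⟩

/-- If a Lie algebra `L` over a field carries a symmetric, nondegenerate bilinear form
invariant under all derivations, and every local derivation of `L` is a derivation, then
every 2-local derivation of `L` is a derivation. -/
theorem twoLocalDerivation_isDerivation (F : Type*) [Field F] (L : Type*) [LieRing L]
    [LieAlgebra F L]
    (kappa : L →ₗ[F] L →ₗ[F] F)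
    (hsymm : ∀ x y : L, kappa x y = kappa y x)
    (hnondeg : ∀ x : L, (∀ y : L, kappa x y = 0) → x = 0)
    (hinv : ∀ D : LieDerivation F L L, ∀ x y : L, kappa (D x) y + kappa x (D y) = 0)
    (hlocal : ∀ Δ : L →ₗ[F] L, (∀ x : L, ∃ D : LieDerivation F L L, Δ x = D x) →
      ∃ D : LieDerivation F L L, ⇑Δ = ⇑D)
    (nabla : L → L)
    (h : ∀ x y : L, ∃ D : LieDerivation F L L, D x = nabla x ∧ D y = nabla y) :
    ∃ D : LieDerivation F L L, ∀ x : L, nabla x = D x :=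
  twoLocalDerivation_isDerivation_general F L kappa hnondeg hinv hlocal nabla h
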